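/- Let x be an element of a ring R and n a positive integer. If xⁿ is addable, then x is addable. In particular, every nilpotent element of R is addable. -/
import Mathlib


/-- A brachymorphism between unital rings: `f (1 + x) = 1 + f x` and `f (x * y) = f x * f y`. -/
def IsBrachy {R S : Type*} [Ring R] [Ring S] (f : R → S) : Prop :=
  (∀ x : R, f (1 + x) = 1 + f x) ∧ (∀ x y : R, f (x * y) = f x * f y)

/-- An element `a` of `R` is addable if every brachymorphism from `R` to any ring
satisfies `f (a + x) = f a + f x`. -/
def Addable {R : Type*} [Ring R] (a : R) : Prop :=
  ∀ (S : Type) (_ : Ring S) (f : R → S), IsBrachy f → ∀ x : R, f (a + x) = f a + f x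

section Aux

variable {R S : Type*} [Ring R] [Ring S] {f : R → S}

lemma brachy_zero (hf : IsBrachy f) : f 0 = 0 := by
  have h0 : f 0 = f 0 * f 0 := by rw [← hf.2]; norm_num
  have h2 : f 0 = f 0 * f 1 := by rw [← hf.2]; norm_num
  have h1 : f 1 = 1 + f 0 := by simpa using hf.1 0
  rw [h1, mul_add, mul_one, ← h0] at h2
  exact (left_eq_add.mp h2)

lemma brachy_one (hf : IsBrachy f) : f 1 = 1 := by
  have h1 : f 1 = 1 + f 0 := by simpa using hf.1 0
  rw [h1, brachy_zero hf, add_zero]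

lemma brachy_pow (hf : IsBrachy f) (x : R) (k : ℕ) : f (x ^ k) = (f x) ^ k := by
  induction k with
  | zero => simpa using brachy_one hf
  | succ k ih => rw [pow_succ, hf.2, ih, pow_succ]

lemma brachy_sub_one (hf : IsBrachy f) (a : R) : f (a - 1) = f a - 1 := by
  have := hf.1 (a - 1)
  rw [add_sub_cancel] at this
  rw [this]; abel

/-- geometric sum identity in any ring -/
lemma geom_mul_self {T : Type*} [Ring T] (x : T) (n : ℕ) :
    (∑ i ∈ Finset.range n, x ^ i) * x = x ^ n + (∑ i ∈ Finset.range n, x ^ i) - 1 := by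
  induction n with
  | zero => simp
  | succ n ih =>
      rw [Finset.sum_range_succ, add_mul, ih, ← pow_succ]
      abel

lemma brachy_geom (hf : IsBrachy f) (x : R) (n : ℕ) :
    f (∑ i ∈ Finset.range n, x ^ i) = ∑ i ∈ Finset.range n, (f x) ^ i := by
  induction n with
  | zero => simpa using brachy_zero hf
  | succ n ih =>
      rw [geom_sum_succ, geom_sum_succ]
      have h : x * (∑ i ∈ Finset.range n, x ^ i) + 1
          = 1 + x * (∑ i ∈ Finset.range n, x ^ i) := by abel
      rw [h, hf.1, hf.2, ih]
      abel

end Aux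

theorem stmt_16 {R : Type*} [Ring R] :
    (∀ (x : R) (n : ℕ), 0 < n → Addable (x ^ n) → Addable x) ∧
    (∀ x : R, IsNilpotent x → Addable x) := by
  have key : ∀ (x : R) (n : ℕ), 0 < n → Addable (x ^ n) → Addable x := by
    intro x n hn hxn S instS f hf y
    set t := f x with ht
    set Q : S := ∑ i ∈ Finset.range n, t ^ i with hQ
    set g : S := f (x + y) - (f x + f y) with hg
    -- Step 1 : t^(n-1) * g = 0
    have hpow : x ^ (n - 1) * x = x ^ n := by
      rw [← pow_succ, Nat.sub_add_cancel hn]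
    have htn : t ^ (n - 1) * t = t ^ n := by
      rw [← pow_succ, Nat.sub_add_cancel hn]
    have hstep1 : t ^ (n - 1) * g = 0 := by
      have h1 : f (x ^ (n - 1) * (x + y)) = t ^ (n - 1) * f (x + y) := by
        rw [hf.2, brachy_pow hf]
      have h2 : x ^ (n - 1) * (x + y) = x ^ n + x ^ (n - 1) * y := by
        rw [mul_add, hpow]
      have h3 : f (x ^ n + x ^ (n - 1) * y) = t ^ n + t ^ (n - 1) * f y := by
        rw [hxn S instS f hf, brachy_pow hf, hf.2, brachy_pow hf]
      have h4 : t ^ (n - 1) * f (x + y) = t ^ n + t ^ (n - 1) * f y := by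
        rw [← h1, h2, h3]
      rw [hg]
      simp only [← ht]
      rw [mul_sub, mul_add, h4, htn]
      abel
    -- Step 2 : Q * g = 0
    have hstep2 : Q * g = 0 := by
      set q : R := ∑ i ∈ Finset.range n, x ^ i with hq
      have hfq : f q = Q := brachy_geom hf x n
      have h1 : f (q * (x + y)) = Q * f (x + y) := by rw [hf.2, hfq]
      have h2 : q * (x + y) = x ^ n + (q * (1 + y) - 1) := by
        rw [mul_add, geom_mul_self, mul_add, mul_one]
        abel
      have h3 : f (x ^ n + (q * (1 + y) - 1)) = t ^ n + (Q * (1 + f y) - 1) := by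
        rw [hxn S instS f hf, brachy_pow hf, brachy_sub_one hf, hf.2, hfq, hf.1]
      have h4 : Q * f (x + y) = t ^ n + (Q * (1 + f y) - 1) := by
        rw [← h1, h2, h3]
      have h5 : Q * t = t ^ n + Q - 1 := geom_mul_self t n
      rw [hg]
      simp only [← ht]
      rw [mul_sub, mul_add, h4, h5, mul_add, mul_one]
      abel
    -- Step 3 : conclude g = 0
    have htQ : t * Q = Q * t := by
      rw [hQ, Finset.mul_sum, Finset.sum_mul]
      exact Finset.sum_congr rfl fun i _ => ((Commute.refl t).pow_right i).eq
    have htn_g : t ^ n * g = 0 := by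
      have hpe : t ^ n = t * t ^ (n - 1) := by
        conv_lhs => rw [← Nat.sub_add_cancel hn]
        rw [pow_succ']
      rw [hpe, mul_assoc, hstep1, mul_zero]
    have hQt_g : Q * t * g = 0 := by
      rw [← htQ, mul_assoc, hstep2, mul_zero]
    have hgz : g = 0 := by
      have h6 : (t ^ n + Q - 1) * g = 0 := by rw [← geom_mul_self t n]; exact hQt_g
      rw [sub_mul, add_mul, one_mul, htn_g, hstep2] at h6
      simpa using h6
    have hfin : f (x + y) = f x + f y := by
      rw [hg, sub_eq_zero] at hgz
      exact hgz
    exact hfin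
  refine ⟨key, ?_⟩
  intro x hx
  obtain ⟨k, hk⟩ := hx
  have h0 : Addable (0 : R) := by
    intro S instS f hf y
    rw [zero_add, brachy_zero hf, zero_add]
  rcases Nat.eq_zero_or_pos k with hk0 | hkpos
  · subst hk0
    simp only [pow_zero] at hk
    have hx0 : x = 0 := by
      calc x = x * 1 := (mul_one x).symm
        _ = x * 0 := by rw [hk]
        _ = 0 := mul_zero x
    rw [hx0]; exact h0
  · exact key x k hkpos (hk ▸ h0)
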